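/- arXiv:1511.00679 — 15 statements merged into one kernel-verified Lean document; each statement's English description precedes it below -/
import Mathlib

section
/- Let M be an ordered Γ-semigroup. Then M is intra-regular if and only if, for every x ∈ M, the filter of M generated by x is N(x) = {y ∈ M | x ∈ (MΓyΓM]}. -/
/-- An ordered Γ-semigroup structure on `M` with set of operators `Γ`:
a multiplication `M → Γ → M → M` that is associative and compatible with the order. -/
structure OGS (M Γ : Type*) [PartialOrder M] where
  mul : M → Γ → M → M
  assoc : ∀ (a b c : M) (γ μ : Γ), mul (mul a γ b) μ c = mul a γ (mul b μ c)
  mono_left : ∀ (a b c : M) (γ : Γ), a ≤ b → mul a γ c ≤ mul b γ c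
  mono_right : ∀ (a b c : M) (γ : Γ), a ≤ b → mul c γ a ≤ mul c γ b

variable {M Γ : Type*} [PartialOrder M]

/-- `(H] = {t ∈ M | t ≤ h for some h ∈ H}`. -/
def dcl (H : Set M) : Set M := {t | ∃ h ∈ H, t ≤ h}

/-- `AΓB = {aγb | a ∈ A, γ ∈ Γ, b ∈ B}`. -/
def OGS.smul (S : OGS M Γ) (A B : Set M) : Set M :=
  {m | ∃ a ∈ A, ∃ γ : Γ, ∃ b ∈ B, m = S.mul a γ b}

/-- `M` is intra-regular if `x ∈ (MΓxγxΓM]` for every `x ∈ M`, `γ ∈ Γ`. -/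
def OGS.intraRegular (S : OGS M Γ) : Prop :=
  ∀ (x : M) (γ : Γ), x ∈ dcl (S.smul (S.smul Set.univ {S.mul x γ x}) Set.univ)

/-- `M` is left regular if `x ∈ (MΓxγx]` for every `x ∈ M`, `γ ∈ Γ`. -/
def OGS.leftRegular (S : OGS M Γ) : Prop :=
  ∀ (x : M) (γ : Γ), x ∈ dcl (S.smul Set.univ {S.mul x γ x})

/-- `M` is right regular if `x ∈ (xγxΓM]` for every `x ∈ M`, `γ ∈ Γ`. -/
def OGS.rightRegular (S : OGS M Γ) : Prop :=
  ∀ (x : M) (γ : Γ), x ∈ dcl (S.smul {S.mul x γ x} Set.univ)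

/-- A left ideal: a nonempty subset `A` with `MΓA ⊆ A` that is downward closed. -/
def OGS.isLeftIdeal (S : OGS M Γ) (A : Set M) : Prop :=
  A.Nonempty ∧ S.smul Set.univ A ⊆ A ∧ ∀ a ∈ A, ∀ b, b ≤ a → b ∈ A

/-- A right ideal: a nonempty subset `A` with `AΓM ⊆ A` that is downward closed. -/
def OGS.isRightIdeal (S : OGS M Γ) (A : Set M) : Prop :=
  A.Nonempty ∧ S.smul A Set.univ ⊆ A ∧ ∀ a ∈ A, ∀ b, b ≤ a → b ∈ A

/-- An (two-sided) ideal. -/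
def OGS.isIdeal (S : OGS M Γ) (A : Set M) : Prop :=
  S.isLeftIdeal A ∧ S.isRightIdeal A

/-- `T` is semiprime if `xγx ∈ T` implies `x ∈ T`. -/
def OGS.semiprime (S : OGS M Γ) (T : Set M) : Prop :=
  ∀ (x : M) (γ : Γ), S.mul x γ x ∈ T → x ∈ T

/-- A subsemigroup: a nonempty subset closed under multiplication. -/
def OGS.isSubsemigroup (S : OGS M Γ) (F : Set M) : Prop :=
  F.Nonempty ∧ ∀ a ∈ F, ∀ b ∈ F, ∀ γ : Γ, S.mul a γ b ∈ F

/-- A filter: a subsemigroup `F` such that `aγb ∈ F` implies `a ∈ F` and `b ∈ F`,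
and `F` is upward closed. -/
def OGS.isFilter (S : OGS M Γ) (F : Set M) : Prop :=
  S.isSubsemigroup F ∧ (∀ (a b : M) (γ : Γ), S.mul a γ b ∈ F → a ∈ F ∧ b ∈ F) ∧
    ∀ a ∈ F, ∀ b, a ≤ b → b ∈ F

/-- `N` is the filter of `M` generated by `x`: the least filter containing `x`. -/
def OGS.isGenFilter (S : OGS M Γ) (x : M) (N : Set M) : Prop :=
  S.isFilter N ∧ x ∈ N ∧ ∀ F, S.isFilter F → x ∈ F → N ⊆ F

/-- `M` is left duo if every left ideal is also a right ideal. -/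
def OGS.leftDuo (S : OGS M Γ) : Prop :=
  ∀ A, S.isLeftIdeal A → S.isRightIdeal A

/-- `M` is right duo if every right ideal is also a left ideal. -/
def OGS.rightDuo (S : OGS M Γ) : Prop :=
  ∀ A, S.isRightIdeal A → S.isLeftIdeal A

section Helpers

set_option linter.unusedSectionVars false
variable [Nonempty Γ]

/-- `(MΓyΓM]` as a set. -/
def Jset (S : OGS M Γ) (y : M) : Set M :=
  dcl (S.smul (S.smul Set.univ {y}) Set.univ)

lemma mem_Jset_of {S : OGS M Γ} {x y : M} (a : M) (α β : Γ) (b : M)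
    (h : x ≤ S.mul (S.mul a α y) β b) : x ∈ Jset S y :=
  ⟨S.mul (S.mul a α y) β b,
    ⟨S.mul a α y, ⟨a, Set.mem_univ a, α, y, rfl, rfl⟩, β, b, Set.mem_univ b, rfl⟩, h⟩

lemma mem_Jset_elim {S : OGS M Γ} {x y : M} (h : x ∈ Jset S y) :
    ∃ (a : M) (α β : Γ) (b : M), x ≤ S.mul (S.mul a α y) β b := by
  obtain ⟨e, ⟨a', ⟨a, -, α, y', hy', rfl⟩, β, b, -, rfl⟩, hx⟩ := h
  rcases hy' with rfl
  exact ⟨a, α, β, b, hx⟩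

lemma Jset_trans {S : OGS M Γ} {x w p : M} (h1 : x ∈ Jset S w) (h2 : w ∈ Jset S p) :
    x ∈ Jset S p := by
  obtain ⟨m, ρ, ρ', m', hx⟩ := mem_Jset_elim h1
  obtain ⟨n, ρ₂, ρ₃, n', hw⟩ := mem_Jset_elim h2
  refine mem_Jset_of (S.mul m ρ n) ρ₂ ρ₃ (S.mul n' ρ' m') ?_
  calc x ≤ S.mul (S.mul m ρ w) ρ' m' := hx
    _ ≤ S.mul (S.mul m ρ (S.mul (S.mul n ρ₂ p) ρ₃ n')) ρ' m' :=
        S.mono_left _ _ _ _ (S.mono_right _ _ _ _ hw)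
    _ = S.mul (S.mul (S.mul m ρ n) ρ₂ p) ρ₃ (S.mul n' ρ' m') := by simp [S.assoc]

lemma intra_mem_self_Jset {S : OGS M Γ} (hS : S.intraRegular) (x : M) : x ∈ Jset S x := by
  obtain ⟨s, δ, δ', t, hx⟩ := mem_Jset_elim (hS x (Classical.arbitrary Γ))
  refine mem_Jset_of (S.mul s δ x) (Classical.arbitrary Γ) δ' t ?_
  calc x ≤ _ := hx
    _ = _ := by simp [S.assoc]

lemma Jset_semiprime {S : OGS M Γ} (hS : S.intraRegular) {p q : M} (δ : Γ)
    (h : S.mul p δ p ∈ Jset S q) : p ∈ Jset S q :=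
  Jset_trans (hS p δ) h

lemma Jset_closed_mul {S : OGS M Γ} (hS : S.intraRegular) {x y z : M} (γ : Γ)
    (hy : x ∈ Jset S y) (hz : x ∈ Jset S z) : x ∈ Jset S (S.mul y γ z) := by
  obtain ⟨a, α, β, b, hxy⟩ := mem_Jset_elim hy
  obtain ⟨c, σ, τ, d, hxz⟩ := mem_Jset_elim hz
  obtain ⟨s, δ, δ', t, hx⟩ := mem_Jset_elim (hS x γ)
  -- x ≤ (sδx) γ (xδ't) ≤ big product containing y ... z
  set w : M := S.mul y β (S.mul (S.mul b γ c) σ z) with hw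
  have hxw : x ∈ Jset S w := by
    refine mem_Jset_of (S.mul s δ a) α τ (S.mul d δ' t) ?_
    calc x ≤ S.mul (S.mul s δ (S.mul x γ x)) δ' t := hx
      _ = S.mul (S.mul (S.mul s δ x) γ x) δ' t := by simp [S.assoc]
      _ ≤ S.mul (S.mul (S.mul s δ (S.mul (S.mul a α y) β b)) γ x) δ' t := by
          exact S.mono_left _ _ _ _ (S.mono_left _ _ _ _ (S.mono_right _ _ _ _ hxy))
      _ ≤ S.mul (S.mul (S.mul s δ (S.mul (S.mul a α y) β b)) γ
            (S.mul (S.mul c σ z) τ d)) δ' t := by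
          exact S.mono_left _ _ _ _ (S.mono_right _ _ _ _ hxz)
      _ = S.mul (S.mul (S.mul s δ a) α w) τ (S.mul d δ' t) := by
          simp [hw, S.assoc]
  -- step: z β y ∈ Jset S (y γ z)
  have hzy : S.mul z β y ∈ Jset S (S.mul y γ z) := by
    refine Jset_semiprime hS γ ?_
    refine mem_Jset_of z β β y (le_of_eq ?_)
    simp [S.assoc]
  -- step: w ∈ Jset S (y γ z)
  have hwJ : w ∈ Jset S (S.mul y γ z) := by
    refine Jset_semiprime hS β ?_
    refine Jset_trans ?_ hzy
    refine mem_Jset_of (S.mul y β (S.mul b γ c)) σ β (S.mul (S.mul b γ c) σ z)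
      (le_of_eq ?_)
    simp [hw, S.assoc]
  exact Jset_trans hxw hwJ

end Helpers

/-- `M` is intra-regular iff for every `x`, the filter generated by `x`
is `{y | x ∈ (MΓyΓM]}`. -/
theorem stmt_0 [Nonempty M] [Nonempty Γ] (S : OGS M Γ) :
    S.intraRegular ↔
      ∀ x : M, S.isGenFilter x {y | x ∈ dcl (S.smul (S.smul Set.univ {y}) Set.univ)} := by
  constructor
  · intro hS x
    refine ⟨⟨⟨⟨x, intra_mem_self_Jset hS x⟩, ?_⟩, ?_, ?_⟩, intra_mem_self_Jset hS x, ?_⟩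
    · intro a ha b hb γ
      exact Jset_closed_mul hS γ ha hb
    · intro a b γ h
      obtain ⟨m, α, β, n, hx⟩ := mem_Jset_elim h
      constructor
      · refine mem_Jset_of m α γ (S.mul b β n) ?_
        calc x ≤ _ := hx
          _ = _ := by simp [S.assoc]
      · refine mem_Jset_of (S.mul m α a) γ β n ?_
        calc x ≤ _ := hx
          _ = _ := by simp [S.assoc]
    · intro a ha b hab
      obtain ⟨m, α, β, n, hx⟩ := mem_Jset_elim ha
      exact mem_Jset_of m α β n
        (le_trans hx (S.mono_left _ _ _ _ (S.mono_right _ _ _ _ hab)))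
    · intro F hF hxF y hy
      obtain ⟨m, α, β, n, hx⟩ := mem_Jset_elim hy
      have h1 : S.mul (S.mul m α y) β n ∈ F := hF.2.2 x hxF _ hx
      have h2 := (hF.2.1 _ _ _ h1).1
      exact (hF.2.1 _ _ _ h2).2
  · intro h x γ
    exact (h x).1.1.2 x (h x).2.1 x (h x).2.1 γ
end

section
/- Let M be an intra-regular ordered Γ-semigroup. Then for every x ∈ M, the set T := {y ∈ M | x ∈ (MΓyΓM]} is a filter of M containing x, and T is contained in every filter of M that contains x; hence T = N(x). -/
variable {M Γ : Type*} [PartialOrder M]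

section Aux

/-- Auxiliary predicate: `x ∈ (MΓcΓM]`. -/
def PP (S : OGS M Γ) (x c : M) : Prop :=
  x ∈ dcl (S.smul (S.smul Set.univ {c}) Set.univ)

lemma PP_iff (S : OGS M Γ) {x c : M} :
    PP S x c ↔ ∃ (p : M) (α β : Γ) (q : M), x ≤ S.mul (S.mul p α c) β q := by
  constructor
  · rintro ⟨h, ⟨a, ⟨p, -, α, b, hb, rfl⟩, β, q, -, rfl⟩, hle⟩
    rcases hb with rfl
    exact ⟨p, α, β, q, hle⟩
  · rintro ⟨p, α, β, q, hle⟩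
    exact ⟨_, ⟨_, ⟨p, trivial, α, c, rfl, rfl⟩, β, q, trivial, rfl⟩, hle⟩

lemma PP_mono (S : OGS M Γ) {x c c' : M} (hx : PP S x c) (hcc : c ≤ c') : PP S x c' := by
  obtain ⟨p, α, β, q, hle⟩ := (PP_iff S).mp hx
  exact (PP_iff S).mpr ⟨p, α, β, q,
    le_trans hle (S.mono_left _ _ _ _ (S.mono_right _ _ _ _ hcc))⟩

lemma PP_trans (S : OGS M Γ) {x c w : M} (h1 : PP S x c) (h2 : PP S c w) : PP S x w := by
  obtain ⟨p, α, β, q, hle1⟩ := (PP_iff S).mp h1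
  obtain ⟨r, lam, kap, s, hle2⟩ := (PP_iff S).mp h2
  refine (PP_iff S).mpr ⟨S.mul p α r, lam, kap, S.mul s β q, ?_⟩
  have step : x ≤ S.mul (S.mul p α (S.mul (S.mul r lam w) kap s)) β q :=
    le_trans hle1 (S.mono_left _ _ _ _ (S.mono_right _ _ _ _ hle2))
  have heq : S.mul (S.mul p α (S.mul (S.mul r lam w) kap s)) β q
      = S.mul (S.mul (S.mul p α r) lam w) kap (S.mul s β q) := by
    simp only [S.assoc]
  exact heq ▸ step

lemma PP_factor (S : OGS M Γ) {x a b : M} {γ : Γ} (hx : PP S x (S.mul a γ b)) :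
    PP S x a ∧ PP S x b := by
  obtain ⟨p, α, β, q, hle⟩ := (PP_iff S).mp hx
  constructor
  · refine (PP_iff S).mpr ⟨p, α, γ, S.mul b β q, ?_⟩
    have heq : S.mul (S.mul p α (S.mul a γ b)) β q
        = S.mul (S.mul p α a) γ (S.mul b β q) := by simp only [S.assoc]
    exact heq ▸ hle
  · refine (PP_iff S).mpr ⟨S.mul p α a, γ, β, q, ?_⟩
    have heq : S.mul (S.mul p α (S.mul a γ b)) β q
        = S.mul (S.mul (S.mul p α a) γ b) β q := by simp only [S.assoc]
    exact heq ▸ hle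

/-- Rotation: if `e = uρz = yνv` then `e ∈ (MΓ(zτy)ΓM]` for every `τ`. -/
lemma PP_head_tail (S : OGS M Γ) (h : S.intraRegular) {e y z u v : M} {ρ ν : Γ}
    (h1 : e = S.mul u ρ z) (h2 : e = S.mul y ν v) (τ : Γ) :
    PP S e (S.mul z τ y) := by
  obtain ⟨p, lam, kap, q, hle⟩ := (PP_iff S).mp (h e τ)
  refine (PP_iff S).mpr ⟨S.mul p lam u, ρ, ν, S.mul v kap q, ?_⟩
  have hle' : e ≤ S.mul (S.mul p lam (S.mul (S.mul u ρ z) τ (S.mul y ν v))) kap q := by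
    rw [← h1, ← h2]; exact hle
  have heq : S.mul (S.mul p lam (S.mul (S.mul u ρ z) τ (S.mul y ν v))) kap q
      = S.mul (S.mul (S.mul p lam u) ρ (S.mul z τ y)) ν (S.mul v kap q) := by
    simp only [S.assoc]
  exact heq ▸ hle'

/-- Swap: if `x ∈ (MΓ(uαv)ΓM]` then `x ∈ (MΓ(vτu)ΓM]` for every `τ`. -/
lemma PP_swap (S : OGS M Γ) (h : S.intraRegular) {x u v : M} {α : Γ}
    (hx : PP S x (S.mul u α v)) (τ : Γ) : PP S x (S.mul v τ u) :=
  PP_trans S hx (PP_head_tail S h rfl rfl τ)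

lemma PP_closure (S : OGS M Γ) (h : S.intraRegular) {x y z : M}
    (hy : PP S x y) (hz : PP S x z) (γ : Γ) : PP S x (S.mul y γ z) := by
  obtain ⟨a, mu, nu, b, hxy⟩ := (PP_iff S).mp hy
  obtain ⟨c, rho, sig, d, hxz⟩ := (PP_iff S).mp hz
  set Y := S.mul (S.mul a mu y) nu b with hY
  set Z := S.mul (S.mul c rho z) sig d with hZ
  obtain ⟨p, lam, bet, q, hx0⟩ := (PP_iff S).mp (h x γ)
  -- x ≤ p lam (x γ x) bet q ≤ p lam (Y γ Z) bet q
  have hbound : S.mul x γ x ≤ S.mul Y γ Z :=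
    le_trans (S.mono_left _ _ _ _ hxy) (S.mono_right _ _ _ _ hxz)
  have hx1 : x ≤ S.mul (S.mul p lam (S.mul Y γ Z)) bet q :=
    le_trans hx0 (S.mono_left _ _ _ _ (S.mono_right _ _ _ _ hbound))
  have h2 : PP S x (S.mul Y γ Z) := (PP_iff S).mpr ⟨p, lam, bet, q, hx1⟩
  -- trim the left: Y γ Z = a mu ((y nu b) γ Z)
  have heq1 : S.mul Y γ Z = S.mul a mu (S.mul (S.mul y nu b) γ Z) := by
    rw [hY]; simp only [S.assoc]
  have h3 : PP S x (S.mul (S.mul y nu b) γ Z) := (PP_factor S (heq1 ▸ h2)).2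
  -- trim the right: (y nu b) γ Z = ((y nu b) γ (c rho z)) sig d
  have heq2 : S.mul (S.mul y nu b) γ Z
      = S.mul (S.mul (S.mul y nu b) γ (S.mul c rho z)) sig d := by
    rw [hZ]; simp only [S.assoc]
  have h4 : PP S x (S.mul (S.mul y nu b) γ (S.mul c rho z)) :=
    (PP_factor S (heq2 ▸ h3)).1
  set e := S.mul (S.mul y nu b) γ (S.mul c rho z) with he
  have hu : e = S.mul (S.mul (S.mul y nu b) γ c) rho z := by
    rw [he]; simp only [S.assoc]
  have hv : e = S.mul y nu (S.mul b γ (S.mul c rho z)) := by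
    rw [he]; simp only [S.assoc]
  have h5 : PP S e (S.mul z γ y) := PP_head_tail S h hu hv γ
  have h6 : PP S x (S.mul z γ y) := PP_trans S h4 h5
  exact PP_swap S h h6 γ

lemma PP_self (S : OGS M Γ) [Nonempty Γ] (h : S.intraRegular) (x : M) : PP S x x :=
  (PP_factor S (h x (Classical.arbitrary Γ))).1

end Aux

/-- if `M` is intra-regular then `{y | x ∈ (MΓyΓM]}` is the filter generated by `x`. -/
theorem stmt_1 [Nonempty M] [Nonempty Γ] (S : OGS M Γ) (h : S.intraRegular) (x : M) :
    S.isGenFilter x {y | x ∈ dcl (S.smul (S.smul Set.univ {y}) Set.univ)} := by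
  have hT : ∀ y : M, y ∈ {y | x ∈ dcl (S.smul (S.smul Set.univ {y}) Set.univ)} ↔ PP S x y :=
    fun y => Iff.rfl
  refine ⟨⟨⟨⟨x, ?_⟩, ?_⟩, ?_, ?_⟩, ?_, ?_⟩
  · exact (hT x).mpr (PP_self S h x)
  · intro a ha b hb γ
    exact (hT _).mpr (PP_closure S h ((hT a).mp ha) ((hT b).mp hb) γ)
  · intro a b γ hab
    have := PP_factor S ((hT _).mp hab)
    exact ⟨(hT a).mpr this.1, (hT b).mpr this.2⟩
  · intro a ha b hab
    exact (hT b).mpr (PP_mono S ((hT a).mp ha) hab)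
  · exact (hT x).mpr (PP_self S h x)
  · rintro F ⟨⟨hFne, hFmul⟩, hFdiv, hFup⟩ hxF y hy
    obtain ⟨p, α, β, q, hle⟩ := (PP_iff S).mp ((hT y).mp hy)
    have h1 : S.mul (S.mul p α y) β q ∈ F := hFup x hxF _ hle
    have h2 : S.mul p α y ∈ F := (hFdiv _ _ _ h1).1
    exact (hFdiv _ _ _ h2).2
end

section
/- Let M be an ordered Γ-semigroup such that for every x ∈ M the filter of M generated by x equals {y ∈ M | x ∈ (MΓyΓM]}. Then M is intra-regular. -/
variable {M Γ : Type*} [PartialOrder M]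

/-- if for every `x` the filter generated by `x` is `{y | x ∈ (MΓyΓM]}`,
then `M` is intra-regular. -/
theorem stmt_2 [Nonempty M] [Nonempty Γ] (S : OGS M Γ)
    (h : ∀ x : M, S.isGenFilter x {y | x ∈ dcl (S.smul (S.smul Set.univ {y}) Set.univ)}) :
    S.intraRegular := by
  intro x γ
  obtain ⟨⟨⟨_, hmul⟩, _, _⟩, hx, _⟩ := h x
  exact hmul x hx x hx γ
end

section
/- An ordered Γ-semigroup M is intra-regular if and only if every ideal of M is semiprime. -/
variable {M Γ : Type*} [PartialOrder M]

/-- `M` is intra-regular iff every ideal of `M` is semiprime. -/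
theorem stmt_3 [Nonempty M] [Nonempty Γ] (S : OGS M Γ) :
    S.intraRegular ↔ ∀ A : Set M, S.isIdeal A → S.semiprime A := by
  constructor
  · intro hir A hA x γ hxx
    obtain ⟨h, ⟨_, ⟨a, -, δ, y, hy, rfl⟩, μ, b, -, rfl⟩, hle⟩ := hir x γ
    rcases hy with rfl
    have h1 : S.mul a δ (S.mul x γ x) ∈ A :=
      hA.1.2.1 ⟨a, trivial, δ, _, hxx, rfl⟩
    have h2 : S.mul (S.mul a δ (S.mul x γ x)) μ b ∈ A :=
      hA.2.2.1 ⟨_, h1, μ, b, trivial, rfl⟩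
    exact hA.1.2.2 _ h2 _ hle
  · intro hsp x γ
    set y := S.mul x γ x with hy
    set T : Set M := dcl (S.smul (S.smul Set.univ {y}) Set.univ) with hT
    have hid : S.isIdeal T := by
      have hne : T.Nonempty := by
        obtain ⟨m⟩ := ‹Nonempty M›
        obtain ⟨δ⟩ := ‹Nonempty Γ›
        exact ⟨S.mul (S.mul m δ y) δ m,
          ⟨_, ⟨_, ⟨m, trivial, δ, y, rfl, rfl⟩, δ, m, trivial, rfl⟩, le_refl _⟩⟩
      have hdown : ∀ a ∈ T, ∀ b, b ≤ a → b ∈ T := by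
        rintro a ⟨h, hh, hle⟩ b hb
        exact ⟨h, hh, le_trans hb hle⟩
      refine ⟨⟨hne, ?_, hdown⟩, ⟨hne, ?_, hdown⟩⟩
      · rintro t ⟨m, -, δ, s, ⟨h, ⟨_, ⟨a, -, γ', _, rfl, rfl⟩, μ, b, -, rfl⟩, hle⟩, rfl⟩
        refine ⟨S.mul (S.mul (S.mul m δ a) γ' y) μ b,
          ⟨_, ⟨_, trivial, γ', y, rfl, rfl⟩, μ, b, trivial, rfl⟩, ?_⟩
        calc S.mul m δ s ≤ S.mul m δ (S.mul (S.mul a γ' y) μ b) :=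
              S.mono_right _ _ _ _ hle
          _ = S.mul (S.mul (S.mul m δ a) γ' y) μ b := by
              rw [← S.assoc, ← S.assoc]
      · rintro t ⟨s, ⟨h, ⟨_, ⟨a, -, γ', _, rfl, rfl⟩, μ, b, -, rfl⟩, hle⟩, δ, m, -, rfl⟩
        refine ⟨S.mul (S.mul a γ' y) μ (S.mul b δ m),
          ⟨_, ⟨a, trivial, γ', y, rfl, rfl⟩, μ, _, trivial, rfl⟩, ?_⟩
        calc S.mul s δ m ≤ S.mul (S.mul (S.mul a γ' y) μ b) δ m :=
              S.mono_left _ _ _ _ hle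
          _ = S.mul (S.mul a γ' y) μ (S.mul b δ m) := S.assoc _ _ _ _ _
    have hyT : y ∈ T := by
      apply hsp T hid y γ
      refine ⟨S.mul (S.mul x γ y) γ x,
        ⟨_, ⟨x, trivial, γ, y, rfl, rfl⟩, γ, x, trivial, rfl⟩, le_of_eq ?_⟩
      rw [hy]; simp only [S.assoc]
    exact hsp T hid x γ hyT
end

section
/- Let M be an ordered Γ-semigroup in which every ideal is semiprime. Then M is intra-regular. -/
variable {M Γ : Type*} [PartialOrder M]

/-- if every ideal of `M` is semiprime, then `M` is intra-regular. -/
theorem stmt_5 [Nonempty M] [Nonempty Γ] (S : OGS M Γ)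
    (h : ∀ A : Set M, S.isIdeal A → S.semiprime A) : S.intraRegular := by
  intro x γ
  set a := S.mul x γ x with ha
  set U : Set M := (({a} ∪ S.smul Set.univ {a}) ∪ S.smul {a} Set.univ) ∪
      S.smul (S.smul Set.univ {a}) Set.univ with hU
  have haU : a ∈ U := Or.inl (Or.inl (Or.inl rfl))
  have hLeft : ∀ u (δ : Γ) hh, hh ∈ U → S.mul u δ hh ∈ U := by
    rintro u δ hh ((((rfl : hh = a) | ⟨v, -, μ, b, (rfl : b = a), rfl⟩) |
        ⟨b, (rfl : b = a), μ, v, -, rfl⟩) | ⟨c, ⟨v, -, μ, b, (rfl : b = a), rfl⟩, ν, w, -, rfl⟩)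
    · exact Or.inl (Or.inl (Or.inr ⟨u, trivial, δ, a, rfl, rfl⟩))
    · refine Or.inl (Or.inl (Or.inr ⟨S.mul u δ v, trivial, μ, a, rfl, ?_⟩))
      simp only [S.assoc]
    · refine Or.inr ⟨S.mul u δ a, ⟨u, trivial, δ, a, rfl, rfl⟩, μ, v, trivial, ?_⟩
      simp only [S.assoc]
    · refine Or.inr ⟨S.mul (S.mul u δ v) μ a,
        ⟨S.mul u δ v, trivial, μ, a, rfl, rfl⟩, ν, w, trivial, ?_⟩
      simp only [S.assoc]
  have hRight : ∀ u (δ : Γ) hh, hh ∈ U → S.mul hh δ u ∈ U := by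
    rintro u δ hh ((((rfl : hh = a) | ⟨v, -, μ, b, (rfl : b = a), rfl⟩) |
        ⟨b, (rfl : b = a), μ, v, -, rfl⟩) | ⟨c, ⟨v, -, μ, b, (rfl : b = a), rfl⟩, ν, w, -, rfl⟩)
    · exact Or.inl (Or.inr ⟨a, rfl, δ, u, trivial, rfl⟩)
    · exact Or.inr ⟨S.mul v μ a, ⟨v, trivial, μ, a, rfl, rfl⟩, δ, u, trivial, rfl⟩
    · refine Or.inl (Or.inr ⟨a, rfl, μ, S.mul v δ u, trivial, ?_⟩)
      simp only [S.assoc]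
    · refine Or.inr ⟨S.mul v μ a, ⟨v, trivial, μ, a, rfl, rfl⟩, ν, S.mul w δ u, trivial, ?_⟩
      simp only [S.assoc]
  have hI : S.isIdeal (dcl U) := by
    refine ⟨⟨⟨a, a, haU, le_refl a⟩, ?_, ?_⟩, ⟨⟨a, a, haU, le_refl a⟩, ?_, ?_⟩⟩
    · rintro m ⟨u, -, δ, t, ⟨hh, hhU, hth⟩, rfl⟩
      exact ⟨S.mul u δ hh, hLeft u δ hh hhU, S.mono_right t hh u δ hth⟩
    · rintro t' ⟨hh, hhU, hth⟩ b hb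
      exact ⟨hh, hhU, le_trans hb hth⟩
    · rintro m ⟨t, ⟨hh, hhU, hth⟩, δ, u, -, rfl⟩
      exact ⟨S.mul hh δ u, hRight u δ hh hhU, S.mono_left t hh u δ hth⟩
    · rintro t' ⟨hh, hhU, hth⟩ b hb
      exact ⟨hh, hhU, le_trans hb hth⟩
  obtain ⟨hh, hhU, hxh⟩ : x ∈ dcl U := h (dcl U) hI x γ ⟨a, haU, le_refl a⟩
  rcases hhU with ((((rfl : hh = a) | ⟨u, -, μ, b, (rfl : b = a), rfl⟩) |
      ⟨b, (rfl : b = a), μ, u, -, rfl⟩) | ⟨c, hc, ν, w, -, rfl⟩)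
  · refine ⟨S.mul (S.mul x γ a) γ x, ⟨S.mul x γ a, ⟨x, trivial, γ, a, rfl, rfl⟩,
      γ, x, trivial, rfl⟩, ?_⟩
    calc x ≤ a := hxh
      _ = S.mul x γ x := ha
      _ ≤ S.mul a γ x := S.mono_left x a x γ hxh
      _ ≤ S.mul a γ a := S.mono_right x a a γ hxh
      _ = S.mul (S.mul x γ a) γ x := by simp only [ha, S.assoc]
  · refine ⟨S.mul (S.mul (S.mul u μ u) μ a) γ x, ⟨S.mul (S.mul u μ u) μ a,
      ⟨S.mul u μ u, trivial, μ, a, rfl, rfl⟩, γ, x, trivial, rfl⟩, ?_⟩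
    calc x ≤ S.mul u μ a := hxh
      _ = S.mul u μ (S.mul x γ x) := by rw [ha]
      _ ≤ S.mul u μ (S.mul (S.mul u μ a) γ x) :=
        S.mono_right (S.mul x γ x) (S.mul (S.mul u μ a) γ x) u μ
          (S.mono_left x (S.mul u μ a) x γ hxh)
      _ = S.mul (S.mul (S.mul u μ u) μ a) γ x := by simp only [ha, S.assoc]
  · refine ⟨S.mul (S.mul x γ a) μ (S.mul u μ u), ⟨S.mul x γ a,
      ⟨x, trivial, γ, a, rfl, rfl⟩, μ, S.mul u μ u, trivial, rfl⟩, ?_⟩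
    calc x ≤ S.mul a μ u := hxh
      _ = S.mul (S.mul x γ x) μ u := by rw [ha]
      _ ≤ S.mul (S.mul x γ (S.mul a μ u)) μ u :=
        S.mono_left (S.mul x γ x) (S.mul x γ (S.mul a μ u)) u μ
          (S.mono_right x (S.mul a μ u) x γ hxh)
      _ = S.mul (S.mul x γ a) μ (S.mul u μ u) := by simp only [ha, S.assoc]
  · exact ⟨S.mul c ν w, ⟨c, hc, ν, w, trivial, rfl⟩, hxh⟩
end

section
/- Let M be an intra-regular ordered Γ-semigroup. Then for all a,b ∈ M and all γ ∈ Γ, one has bΓMγMΓa ⊆ (MΓ(aγb)ΓM], where bΓMγMΓa := {bλuγvδa | u,v ∈ M, λ,δ ∈ Γ}. -/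
variable {M Γ : Type*} [PartialOrder M]

/-- in an intra-regular `M`, `bΓMγMΓa ⊆ (MΓ(aγb)ΓM]`. -/
theorem stmt_7 [Nonempty M] [Nonempty Γ] (S : OGS M Γ) (h : S.intraRegular)
    (a b : M) (γ : Γ) :
    {m : M | ∃ u : M, ∃ v : M, ∃ lam : Γ, ∃ del : Γ,
        m = S.mul (S.mul (S.mul b lam u) γ v) del a}
      ⊆ dcl (S.smul (S.smul Set.univ {S.mul a γ b}) Set.univ) := by
  rintro m ⟨u, v, lam, del, rfl⟩
  set x := S.mul (S.mul (S.mul b lam u) γ v) del a with hx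
  obtain ⟨h0, ⟨c, ⟨p, -, α, t, ht, rfl⟩, β, q, -, rfl⟩, hle⟩ := h x γ
  rw [Set.mem_singleton_iff] at ht; subst ht
  refine ⟨_, ⟨_, ⟨S.mul p α (S.mul b lam (S.mul u γ v)), trivial, del,
    S.mul a γ b, rfl, rfl⟩, lam, S.mul u γ (S.mul v del (S.mul a β q)),
    trivial, rfl⟩, ?_⟩
  calc x ≤ S.mul (S.mul p α (S.mul x γ x)) β q := hle
    _ = _ := by simp only [S.assoc, hx]
end

section
/- Let M be an intra-regular ordered Γ-semigroup, x,a,b ∈ M and γ ∈ Γ. If x ∈ (MΓaΓM] and x ∈ (MΓbΓM], then x ∈ (MΓ(aγb)ΓM]. -/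
variable {M Γ : Type*} [PartialOrder M]

/-- in an intra-regular `M`, if `x ∈ (MΓaΓM]` and `x ∈ (MΓbΓM]`
then `x ∈ (MΓ(aγb)ΓM]`. -/
theorem stmt_8 [Nonempty M] [Nonempty Γ] (S : OGS M Γ) (h : S.intraRegular)
    (x a b : M) (γ : Γ)
    (ha : x ∈ dcl (S.smul (S.smul Set.univ {a}) Set.univ))
    (hb : x ∈ dcl (S.smul (S.smul Set.univ {b}) Set.univ)) :
    x ∈ dcl (S.smul (S.smul Set.univ {S.mul a γ b}) Set.univ) := by
  set T := dcl (S.smul (S.smul Set.univ {S.mul a γ b}) Set.univ) with hTdef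
  -- generic elimination for `dcl (MΓ{y}ΓM)`
  have elim : ∀ (y t : M), t ∈ dcl (S.smul (S.smul Set.univ {y}) Set.univ) →
      ∃ p q σ τ, t ≤ S.mul (S.mul p σ y) τ q := by
    rintro y t ⟨h', ⟨m, ⟨p, -, σ, z, rfl, rfl⟩, τ, q, -, rfl⟩, ht⟩
    exact ⟨p, q, σ, τ, ht⟩
  -- introduction for T
  have memT : ∀ (p q : M) (σ τ : Γ) (t : M),
      t ≤ S.mul (S.mul p σ (S.mul a γ b)) τ q → t ∈ T := by
    intro p q σ τ t ht
    exact ⟨S.mul (S.mul p σ (S.mul a γ b)) τ q,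
      ⟨S.mul p σ (S.mul a γ b), ⟨p, trivial, σ, S.mul a γ b, rfl, rfl⟩,
        τ, q, trivial, rfl⟩, ht⟩
  -- T is downward closed
  have dclT : ∀ t ∈ T, ∀ s, s ≤ t → s ∈ T := by
    intro t ht s hst
    obtain ⟨p, q, σ, τ, h1⟩ := elim _ t ht
    exact memT p q σ τ s (le_trans hst h1)
  -- T absorbs multiplication on the left
  have leftT : ∀ t ∈ T, ∀ (u : M) (σ : Γ), S.mul u σ t ∈ T := by
    intro t ht u σ
    obtain ⟨p, q, σ', τ', h1⟩ := elim _ t ht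
    have h2 : S.mul u σ t ≤ S.mul u σ (S.mul (S.mul p σ' (S.mul a γ b)) τ' q) :=
      S.mono_right _ _ _ _ h1
    have h3 : S.mul u σ (S.mul (S.mul p σ' (S.mul a γ b)) τ' q)
        = S.mul (S.mul (S.mul u σ p) σ' (S.mul a γ b)) τ' q := by
      simp only [S.assoc]
    exact memT _ _ _ _ _ (h3 ▸ h2)
  -- T absorbs multiplication on the right
  have rightT : ∀ t ∈ T, ∀ (u : M) (σ : Γ), S.mul t σ u ∈ T := by
    intro t ht u σ
    obtain ⟨p, q, σ', τ', h1⟩ := elim _ t ht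
    have h2 : S.mul t σ u ≤ S.mul (S.mul (S.mul p σ' (S.mul a γ b)) τ' q) σ u :=
      S.mono_left _ _ _ _ h1
    have h3 : S.mul (S.mul (S.mul p σ' (S.mul a γ b)) τ' q) σ u
        = S.mul (S.mul p σ' (S.mul a γ b)) τ' (S.mul q σ u) := by
      simp only [S.assoc]
    exact memT _ _ _ _ _ (h3 ▸ h2)
  -- T is semiprime
  have sp : ∀ (y : M) (μ : Γ), S.mul y μ y ∈ T → y ∈ T := by
    intro y μ hy
    obtain ⟨p, q, σ, τ, h1⟩ := elim _ y (h y μ)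
    exact dclT _ (rightT _ (leftT _ hy p σ) q τ) y h1
  -- bμa ∈ T for every μ
  have hba : ∀ μ : Γ, S.mul b μ a ∈ T := by
    intro μ
    obtain ⟨p, q, σ, τ, h1⟩ := elim _ (S.mul b μ a) (h (S.mul b μ a) γ)
    have h2 : S.mul (S.mul p σ (S.mul (S.mul b μ a) γ (S.mul b μ a))) τ q
        = S.mul (S.mul (S.mul p σ b) μ (S.mul a γ b)) μ (S.mul a τ q) := by
      simp only [S.assoc]
    exact memT _ _ _ _ _ (h2 ▸ h1)
  -- decompose the hypotheses
  obtain ⟨u, v, α, β, h1⟩ := elim a x ha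
  obtain ⟨w, z, δ, ε, h2⟩ := elim b x hb
  set c := S.mul a β (S.mul (S.mul v γ w) δ b) with hcdef
  -- cγc ∈ T since it contains bγa
  have hcc : S.mul c γ c ∈ T := by
    have heq : S.mul c γ c
        = S.mul (S.mul a β (S.mul v γ w)) δ
            (S.mul (S.mul b γ a) β (S.mul (S.mul v γ w) δ b)) := by
      simp only [hcdef, S.assoc]
    rw [heq]
    exact leftT _ (rightT _ (hba γ) _ _) _ _
  have hc : c ∈ T := sp c γ hcc
  -- xγx ≤ uα c εz
  have hle : S.mul x γ x ≤ S.mul u α (S.mul c ε z) := by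
    have s1 : S.mul x γ x ≤ S.mul (S.mul (S.mul u α a) β v) γ x :=
      S.mono_left _ _ _ _ h1
    have s2 : S.mul (S.mul (S.mul u α a) β v) γ x
        ≤ S.mul (S.mul (S.mul u α a) β v) γ (S.mul (S.mul w δ b) ε z) :=
      S.mono_right _ _ _ _ h2
    have heq : S.mul (S.mul (S.mul u α a) β v) γ (S.mul (S.mul w δ b) ε z)
        = S.mul u α (S.mul c ε z) := by
      simp only [hcdef, S.assoc]
    exact heq ▸ le_trans s1 s2
  have hxx : S.mul x γ x ∈ T :=
    dclT _ (leftT _ (rightT _ hc z ε) u α) _ hle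
  exact sp x γ hxx
end

section
/- Let M be an ordered Γ-semigroup. If M is right regular, then M is intra-regular. -/
variable {M Γ : Type*} [PartialOrder M]

/-- right regular implies intra-regular. -/
theorem stmt_11 [Nonempty M] [Nonempty Γ] (S : OGS M Γ) (h : S.rightRegular) :
    S.intraRegular := by
  intro x γ
  obtain ⟨t, ⟨a, ha, δ, m, -, rfl⟩, hx⟩ := h x γ
  rw [Set.mem_singleton_iff] at ha; subst ha
  refine ⟨S.mul (S.mul x γ (S.mul x γ x)) δ (S.mul m δ m),
    ⟨S.mul x γ (S.mul x γ x), ⟨x, trivial, γ, S.mul x γ x, rfl, rfl⟩,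
      δ, S.mul m δ m, trivial, rfl⟩, ?_⟩
  calc x ≤ S.mul (S.mul x γ x) δ m := hx
    _ ≤ S.mul (S.mul x γ (S.mul (S.mul x γ x) δ m)) δ m := by
        apply S.mono_left
        exact S.mono_right _ _ _ _ hx
    _ = _ := by rw [← S.assoc x (S.mul x γ x) m γ δ, S.assoc]
end

section
/- Let M be an ordered Γ-semigroup. Then M is left regular and left duo if and only if, for every x ∈ M, the filter of M generated by x is N(x) = {y ∈ M | x ∈ (MΓy]}. -/
variable {M Γ : Type*} [PartialOrder M]

/-- `t ∈ (MΓy]`. -/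
def OGS.below (S : OGS M Γ) (y t : M) : Prop := ∃ a γ, t ≤ S.mul a γ y

lemma OGS.below_iff (S : OGS M Γ) (y t : M) :
    t ∈ dcl (S.smul Set.univ {y}) ↔ S.below y t := by
  constructor
  · rintro ⟨h, ⟨a, -, γ, b, rfl, rfl⟩, ht⟩
    exact ⟨a, γ, ht⟩
  · rintro ⟨a, γ, ht⟩
    exact ⟨S.mul a γ y, ⟨a, trivial, γ, y, rfl, rfl⟩, ht⟩

lemma OGS.below_trans (S : OGS M Γ) {w t s : M} (h1 : S.below w t) (h2 : S.below t s) :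
    S.below w s := by
  obtain ⟨a, γ, ha⟩ := h1
  obtain ⟨b, μ, hb⟩ := h2
  exact ⟨S.mul b μ a, γ, hb.trans ((S.mono_right _ _ b μ ha).trans (S.assoc b a w μ γ).ge)⟩

lemma OGS.below_mul_left (S : OGS M Γ) {y t : M} (h : S.below y t) (m : M) (γ : Γ) :
    S.below y (S.mul m γ t) := by
  obtain ⟨a, σ, ha⟩ := h
  exact ⟨S.mul m γ a, σ, (S.mono_right _ _ m γ ha).trans (S.assoc m a y γ σ).ge⟩

lemma OGS.below_selfmem [Nonempty Γ] (S : OGS M Γ) (hLR : S.leftRegular) (t : M) :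
    S.below t t := by
  obtain ⟨γ⟩ := ‹Nonempty Γ›
  obtain ⟨h, ⟨m, -, μ, b, rfl, rfl⟩, ht⟩ := hLR t γ
  exact ⟨S.mul m μ t, γ, ht.trans (S.assoc m t t μ γ).ge⟩

lemma OGS.below_semiprime (S : OGS M Γ) (hLR : S.leftRegular) {y t : M} {γ : Γ}
    (h : S.below y (S.mul t γ t)) : S.below y t := by
  obtain ⟨a, σ, ha⟩ := h
  obtain ⟨h, ⟨m, -, μ, b, rfl, rfl⟩, ht⟩ := hLR t γ
  exact ⟨S.mul m μ a, σ,
    ht.trans ((S.mono_right _ _ m μ ha).trans (S.assoc m a y μ σ).ge)⟩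

lemma OGS.below_mul_right [Nonempty M] [Nonempty Γ] (S : OGS M Γ) (hLD : S.leftDuo)
    {y t : M} (h : S.below y t) (m : M) (γ : Γ) : S.below y (S.mul t γ m) := by
  have hA : S.isLeftIdeal {t | S.below y t} := by
    refine ⟨⟨S.mul (Classical.arbitrary M) (Classical.arbitrary Γ) y,
      ⟨_, _, le_rfl⟩⟩, ?_, ?_⟩
    · rintro _ ⟨a, -, σ, b, hb, rfl⟩
      exact S.below_mul_left hb a σ
    · rintro a ⟨p, σ, hp⟩ b hb
      exact ⟨p, σ, hb.trans hp⟩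
  exact (hLD _ hA).2.1 ⟨t, h, γ, m, trivial, rfl⟩

/-- `M` is left regular and left duo iff for every `x`,
the filter generated by `x` is `{y | x ∈ (MΓy]}`. -/
theorem stmt_12 [Nonempty M] [Nonempty Γ] (S : OGS M Γ) :
    (S.leftRegular ∧ S.leftDuo) ↔
      ∀ x : M, S.isGenFilter x {y | x ∈ dcl (S.smul Set.univ {y})} := by
  constructor
  · rintro ⟨hLR, hLD⟩ x
    have hset : {y | x ∈ dcl (S.smul Set.univ {y})} = {y | S.below y x} := by
      ext y; exact S.below_iff y x
    rw [hset]
    refine ⟨⟨⟨⟨x, S.below_selfmem hLR x⟩, ?_⟩, ?_, ?_⟩, S.below_selfmem hLR x, ?_⟩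
    · -- subsemigroup
      rintro y hy z hz δ
      obtain ⟨a, γ, ha⟩ := hy
      obtain ⟨b, μ, hb⟩ := hz
      have step0 : S.below (S.mul y δ z) (S.mul y δ z) := S.below_selfmem hLR _
      have step1 : ∀ σ : Γ, S.below (S.mul y δ z) (S.mul z σ y) := by
        intro σ
        have h2 : S.below (S.mul y δ z) (S.mul z σ (S.mul (S.mul y δ z) σ y)) :=
          S.below_mul_left (S.below_mul_right hLD step0 y σ) z σ
        have heq : S.mul (S.mul z σ y) δ (S.mul z σ y)
            = S.mul z σ (S.mul (S.mul y δ z) σ y) := by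
          rw [S.assoc z y (S.mul z σ y) σ δ, ← S.assoc y z y δ σ]
        have h3 : S.below (S.mul y δ z) (S.mul (S.mul z σ y) δ (S.mul z σ y)) := by
          rw [heq]; exact h2
        exact S.below_semiprime hLR h3
      have step2 : S.below (S.mul y δ z) (S.mul y δ (S.mul b μ z)) := by
        have h2 : S.below (S.mul y δ z)
            (S.mul (S.mul z δ y) δ (S.mul b μ z)) :=
          S.below_mul_right hLD (step1 δ) (S.mul b μ z) δ
        have h4 : S.below (S.mul y δ z)
            (S.mul y δ (S.mul b μ (S.mul (S.mul z δ y) δ (S.mul b μ z)))) :=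
          S.below_mul_left (S.below_mul_left h2 b μ) y δ
        have heq : S.mul (S.mul y δ (S.mul b μ z)) δ (S.mul y δ (S.mul b μ z))
            = S.mul y δ (S.mul b μ (S.mul (S.mul z δ y) δ (S.mul b μ z))) := by
          rw [S.assoc y (S.mul b μ z) _ δ δ, S.assoc b z _ μ δ,
            ← S.assoc z y (S.mul b μ z) δ δ]
        have h5 : S.below (S.mul y δ z)
            (S.mul (S.mul y δ (S.mul b μ z)) δ (S.mul y δ (S.mul b μ z))) := by
          rw [heq]; exact h4
        exact S.below_semiprime hLR h5
      -- x is below (y δ (b μ z))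
      obtain ⟨m, ν, hm⟩ := (S.below_iff _ x).mp (hLR x δ)
      have hxx : S.mul x δ x ≤ S.mul a γ (S.mul y δ (S.mul b μ z)) :=
        ((S.mono_left _ _ x δ ha).trans (S.mono_right _ _ (S.mul a γ y) δ hb)).trans
          (S.assoc a y (S.mul b μ z) γ δ).le
      have hbt0 : S.below (S.mul y δ (S.mul b μ z)) x :=
        ⟨S.mul m ν a, γ,
          hm.trans ((S.mono_right _ _ m ν hxx).trans (S.assoc m a _ ν γ).ge)⟩
      exact S.below_trans step2 hbt0
    · -- filter back condition
      intro a b γ h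
      obtain ⟨m, ν, hm⟩ := h
      constructor
      · exact S.below_trans (S.below_mul_right hLD (S.below_selfmem hLR a) b γ)
          ⟨m, ν, hm⟩
      · exact ⟨S.mul m ν a, γ, hm.trans (S.assoc m a b ν γ).ge⟩
    · -- upward closed
      rintro a ⟨m, ν, hm⟩ b hab
      exact ⟨m, ν, hm.trans (S.mono_right a b m ν hab)⟩
    · -- least
      rintro F hF hxF y ⟨m, ν, hm⟩
      exact (hF.2.1 m y ν (hF.2.2 x hxF _ hm)).2
  · intro h
    constructor
    · intro x γ
      exact (h x).1.1.2 x (h x).2.1 x (h x).2.1 γ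
    · rintro A ⟨hne, hML, hdown⟩
      refine ⟨hne, ?_, hdown⟩
      rintro m ⟨a, haA, γ, b, -, rfl⟩
      have haN := ((h (S.mul a γ b)).1.2.1 a b γ (h (S.mul a γ b)).2.1).1
      obtain ⟨p, σ, hp⟩ := (S.below_iff a (S.mul a γ b)).mp haN
      exact hdown _ (hML ⟨p, trivial, σ, a, haA, rfl⟩) _ hp
end

section
/- Let M be a left regular and left duo ordered Γ-semigroup. Then for every x ∈ M, the set T := {y ∈ M | x ∈ (MΓy]} is a filter of M containing x, and T is contained in every filter of M that contains x; hence T = N(x). -/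
variable {M Γ : Type*} [PartialOrder M]

/-- Membership in `(MΓ{y}]` unfolded. -/
lemma mem_MGy (S : OGS M Γ) (x y : M) :
    x ∈ dcl (S.smul Set.univ {y}) ↔ ∃ m, ∃ γ : Γ, x ≤ S.mul m γ y := by
  constructor
  · rintro ⟨h, ⟨m, -, γ, b, rfl, rfl⟩, hx⟩
    exact ⟨m, γ, hx⟩
  · rintro ⟨m, γ, hx⟩
    exact ⟨S.mul m γ y, ⟨m, trivial, γ, y, rfl, rfl⟩, hx⟩

/-- `(MΓ{a}]` is a left ideal. -/
lemma MGa_leftIdeal [Nonempty M] [Nonempty Γ] (S : OGS M Γ) (a : M) :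
    S.isLeftIdeal (dcl (S.smul Set.univ {a})) := by
  refine ⟨⟨S.mul (Classical.arbitrary M) (Classical.arbitrary Γ) a,
    (mem_MGy S _ a).2 ⟨_, _, le_refl _⟩⟩, ?_, ?_⟩
  · rintro t ⟨m, -, γ, u, hu, rfl⟩
    obtain ⟨n, δ, hn⟩ := (mem_MGy S u a).1 hu
    refine (mem_MGy S _ a).2 ⟨S.mul m γ n, δ, ?_⟩
    calc S.mul m γ u ≤ S.mul m γ (S.mul n δ a) := S.mono_right _ _ _ _ hn
      _ = S.mul (S.mul m γ n) δ a := (S.assoc _ _ _ _ _).symm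
  · rintro u hu b hb
    obtain ⟨n, δ, hn⟩ := (mem_MGy S u a).1 hu
    exact (mem_MGy S b a).2 ⟨n, δ, hb.trans hn⟩

/-- By left regularity, `a ∈ (MΓ{a}]`. -/
lemma self_mem_MGa [Nonempty Γ] (S : OGS M Γ) (hreg : S.leftRegular) (a : M) :
    a ∈ dcl (S.smul Set.univ {a}) := by
  obtain ⟨h, ⟨p, -, μ, b, rfl, rfl⟩, ha⟩ := hreg a (Classical.arbitrary Γ)
  exact (mem_MGy S a a).2 ⟨S.mul p μ a, _, ha.trans_eq (S.assoc _ _ _ _ _).symm⟩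

/-- In a left duo semigroup, `(MΓ{a}]` absorbs multiplication on the right. -/
lemma MGa_absorb_right [Nonempty M] [Nonempty Γ] (S : OGS M Γ) (hduo : S.leftDuo)
    (a : M) {t : M} (ht : t ∈ dcl (S.smul Set.univ {a})) (γ : Γ) (n : M) :
    S.mul t γ n ∈ dcl (S.smul Set.univ {a}) :=
  (hduo _ (MGa_leftIdeal S a)).2.1 ⟨t, ht, γ, n, trivial, rfl⟩

/-- If `x ∈ (MΓ{b}]` then for any `γ` there is `r` with `x ≤ rγb`
(using left regularity of `b`). -/
lemma gamma_witness [Nonempty M] [Nonempty Γ] (S : OGS M Γ) (hreg : S.leftRegular)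
    {x b : M} (h : x ∈ dcl (S.smul Set.univ {b})) (γ : Γ) :
    ∃ r, x ≤ S.mul r γ b := by
  obtain ⟨m, α, hm⟩ := (mem_MGy S x b).1 h
  obtain ⟨h', ⟨q, -, ζ, c, rfl, rfl⟩, hb⟩ := hreg b γ
  refine ⟨S.mul m α (S.mul q ζ b), ?_⟩
  calc x ≤ S.mul m α b := hm
    _ ≤ S.mul m α (S.mul q ζ (S.mul b γ b)) := S.mono_right _ _ _ _ hb
    _ = S.mul m α (S.mul (S.mul q ζ b) γ b) := by rw [S.assoc]
    _ = S.mul (S.mul m α (S.mul q ζ b)) γ b := (S.assoc _ _ _ _ _).symm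

/-- if `M` is left regular and left duo then `{y | x ∈ (MΓy]}`
is the filter generated by `x`. -/
theorem stmt_13 [Nonempty M] [Nonempty Γ] (S : OGS M Γ)
    (hreg : S.leftRegular) (hduo : S.leftDuo) (x : M) :
    S.isGenFilter x {y | x ∈ dcl (S.smul Set.univ {y})} := by
  have hxT : x ∈ {y | x ∈ dcl (S.smul Set.univ {y})} := self_mem_MGa S hreg x
  refine ⟨⟨⟨⟨x, hxT⟩, ?_⟩, ?_, ?_⟩, hxT, ?_⟩
  · -- subsemigroup
    intro a ha b hb γ
    obtain ⟨m, α, hma⟩ := (mem_MGy S x a).1 ha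
    obtain ⟨r, hrb⟩ := gamma_witness S hreg hb γ
    -- left regularity of x at γ
    obtain ⟨h', ⟨p, -, μ, c, rfl, rfl⟩, hx⟩ := hreg x γ
    -- x γ r ∈ (MΓ{x}]
    have hxr : S.mul x γ r ∈ dcl (S.smul Set.univ {x}) :=
      MGa_absorb_right S hduo x (self_mem_MGa S hreg x) γ r
    obtain ⟨s, ε, hs⟩ := (mem_MGy S _ x).1 hxr
    refine (mem_MGy S x (S.mul a γ b)).2 ⟨S.mul p μ (S.mul s ε m), α, ?_⟩
    calc x ≤ S.mul p μ (S.mul x γ x) := hx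
      _ ≤ S.mul p μ (S.mul x γ (S.mul r γ b)) :=
          S.mono_right _ _ _ _ (S.mono_right _ _ _ _ hrb)
      _ = S.mul p μ (S.mul (S.mul x γ r) γ b) := by rw [S.assoc]
      _ ≤ S.mul p μ (S.mul (S.mul s ε x) γ b) :=
          S.mono_right _ _ _ _ (S.mono_left _ _ _ _ hs)
      _ ≤ S.mul p μ (S.mul (S.mul s ε (S.mul m α a)) γ b) :=
          S.mono_right _ _ _ _ (S.mono_left _ _ _ _ (S.mono_right _ _ _ _ hma))
      _ = S.mul (S.mul p μ (S.mul s ε m)) α (S.mul a γ b) := by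
          simp only [S.assoc]
  · -- aγb ∈ T → a ∈ T ∧ b ∈ T
    intro a b γ hab
    obtain ⟨m, δ, hm⟩ := (mem_MGy S x (S.mul a γ b)).1 hab
    constructor
    · have hab' : S.mul a γ b ∈ dcl (S.smul Set.univ {a}) :=
        MGa_absorb_right S hduo a (self_mem_MGa S hreg a) γ b
      obtain ⟨s, ε, hs⟩ := (mem_MGy S _ a).1 hab'
      refine (mem_MGy S x a).2 ⟨S.mul m δ s, ε, ?_⟩
      calc x ≤ S.mul m δ (S.mul a γ b) := hm
        _ ≤ S.mul m δ (S.mul s ε a) := S.mono_right _ _ _ _ hs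
        _ = S.mul (S.mul m δ s) ε a := (S.assoc _ _ _ _ _).symm
    · exact (mem_MGy S x b).2 ⟨S.mul m δ a, γ,
        hm.trans_eq (by rw [← S.assoc])⟩
  · -- upward closed
    intro a ha b hab
    obtain ⟨m, γ, hm⟩ := (mem_MGy S x a).1 ha
    exact (mem_MGy S x b).2 ⟨m, γ, hm.trans (S.mono_right _ _ _ _ hab)⟩
  · -- minimality
    intro F hF hxF y hy
    obtain ⟨m, γ, hm⟩ := (mem_MGy S x y).1 hy
    exact (hF.2.1 m y γ (hF.2.2 x hxF _ hm)).2
end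

section
/- Let M be an ordered Γ-semigroup such that for every x ∈ M the filter of M generated by x equals {y ∈ M | x ∈ (MΓy]}. Then M is left regular and left duo. -/
variable {M Γ : Type*} [PartialOrder M]

/-- if for every `x` the filter generated by `x` is `{y | x ∈ (MΓy]}`,
then `M` is left regular and left duo. -/
theorem stmt_14 [Nonempty M] [Nonempty Γ] (S : OGS M Γ)
    (h : ∀ x : M, S.isGenFilter x {y | x ∈ dcl (S.smul Set.univ {y})}) :
    S.leftRegular ∧ S.leftDuo := by
  constructor
  · intro x γ
    have hx : x ∈ {y | x ∈ dcl (S.smul Set.univ {y})} := (h x).2.1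
    exact ((h x).1.1.2 x hx x hx γ)
  · intro A hA
    refine ⟨hA.1, ?_, hA.2.2⟩
    rintro m ⟨a, ha, γ, b, -, rfl⟩
    set x := S.mul a γ b with hxdef
    have hx : x ∈ {y | x ∈ dcl (S.smul Set.univ {y})} := (h x).2.1
    have hax : a ∈ {y | x ∈ dcl (S.smul Set.univ {y})} := ((h x).1.2.1 a b γ hx).1
    obtain ⟨t, ⟨m', -, γ', a', ha', rfl⟩, hle⟩ := hax
    have ha'' : a' ∈ A := ha' ▸ ha
    exact hA.2.2 _ (hA.2.1 ⟨m', trivial, γ', a', ha'', rfl⟩) _ hle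
end

section
/- Let M be a left regular and left duo ordered Γ-semigroup. Then for all a,b ∈ M and all γ ∈ Γ, one has bγMΓa ⊆ (MΓ(aγb)], where bγMΓa := {bγuμa | u ∈ M, μ ∈ Γ}. -/
variable {M Γ : Type*} [PartialOrder M]

/-- in a left regular and left duo `M`, `bγMΓa ⊆ (MΓ(aγb)]`. -/
theorem stmt_15 [Nonempty M] [Nonempty Γ] (S : OGS M Γ)
    (hreg : S.leftRegular) (hduo : S.leftDuo) (a b : M) (γ : Γ) :
    {m : M | ∃ u : M, ∃ μ : Γ, m = S.mul (S.mul b γ u) μ a}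
      ⊆ dcl (S.smul Set.univ {S.mul a γ b}) := by
  set I := dcl (S.smul Set.univ {S.mul a γ b}) with hI
  have hleft : S.isLeftIdeal I := by
    refine ⟨⟨S.mul (Classical.arbitrary M) (Classical.arbitrary Γ) (S.mul a γ b),
      ⟨_, ⟨_, Set.mem_univ _, _, _, rfl, rfl⟩, le_refl _⟩⟩, ?_, ?_⟩
    · rintro m ⟨x, -, ν, t, ⟨h, ⟨y, -, κ, c, hc, rfl⟩, hth⟩, rfl⟩
      rcases hc with rfl
      exact ⟨S.mul (S.mul x ν y) κ (S.mul a γ b),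
        ⟨_, Set.mem_univ _, _, _, rfl, rfl⟩,
        le_trans (S.mono_right _ _ _ _ hth) (le_of_eq (S.assoc ..).symm)⟩
    · rintro t ⟨h, hh, hth⟩ s hst
      exact ⟨h, hh, le_trans hst hth⟩
  have hright := hduo I hleft
  rintro m ⟨u, μ, rfl⟩
  set m := S.mul (S.mul b γ u) μ a with hm
  obtain ⟨h, ⟨w, -, δ, c, hc, rfl⟩, hmh⟩ := hreg m γ
  rcases hc with rfl
  have hq : S.mul (S.mul (S.mul (S.mul w δ b) γ u) μ (S.mul a γ b)) γ (S.mul u μ a)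
      = S.mul w δ (S.mul m γ m) := by
    simp only [hm, S.assoc]
  have hqI : S.mul (S.mul (S.mul (S.mul w δ b) γ u) μ (S.mul a γ b)) γ (S.mul u μ a) ∈ I := by
    apply hright.2.1
    refine ⟨_, ?_, _, _, Set.mem_univ _, rfl⟩
    exact ⟨S.mul (S.mul (S.mul w δ b) γ u) μ (S.mul a γ b),
      ⟨_, Set.mem_univ _, _, _, rfl, rfl⟩, le_refl _⟩
  exact hright.2.2 _ hqI m (hq ▸ hmh)
end

section
/- Let M be an ordered Γ-semigroup. Then M is right regular and right duo if and only if, for every x ∈ M, the filter of M generated by x is N(x) = {y ∈ M | x ∈ (yΓM]}. -/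
variable {M Γ : Type*} [PartialOrder M]

lemma OGS.mem_R (S : OGS M Γ) {x y : M} :
    x ∈ dcl (S.smul {y} Set.univ) ↔ ∃ (γ : Γ) (m : M), x ≤ S.mul y γ m := by
  constructor
  · rintro ⟨h, ⟨a, ha, γ, b, -, rfl⟩, hx⟩
    rcases Set.mem_singleton_iff.mp ha with rfl
    exact ⟨γ, b, hx⟩
  · rintro ⟨γ, m, hx⟩
    exact ⟨S.mul y γ m, ⟨y, rfl, γ, m, trivial, rfl⟩, hx⟩

lemma OGS.R_rightIdeal [Nonempty M] [Nonempty Γ] (S : OGS M Γ) (y : M) :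
    S.isRightIdeal (dcl (S.smul {y} Set.univ)) := by
  obtain ⟨γ0⟩ := (inferInstance : Nonempty Γ)
  obtain ⟨m0⟩ := (inferInstance : Nonempty M)
  refine ⟨⟨S.mul y γ0 m0, S.mem_R.mpr ⟨γ0, m0, le_refl _⟩⟩, ?_, ?_⟩
  · rintro t ⟨a, ha, δ, b, -, rfl⟩
    obtain ⟨ρ, k, hak⟩ := S.mem_R.mp ha
    refine S.mem_R.mpr ⟨ρ, S.mul k δ b, ?_⟩
    calc S.mul a δ b ≤ S.mul (S.mul y ρ k) δ b := S.mono_left _ _ _ _ hak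
      _ = S.mul y ρ (S.mul k δ b) := S.assoc _ _ _ _ _
  · rintro a ha b hb
    obtain ⟨ρ, k, hak⟩ := S.mem_R.mp ha
    exact S.mem_R.mpr ⟨ρ, k, hb.trans hak⟩

lemma OGS.lemA (S : OGS M Γ) (hr : S.rightRegular) {x y m : M} {α : Γ}
    (h : x ≤ S.mul y α m) (γ : Γ) : ∃ s, x ≤ S.mul y γ s := by
  obtain ⟨θ, w, hy⟩ := S.mem_R.mp (hr y γ)
  refine ⟨S.mul y θ (S.mul w α m), ?_⟩
  calc x ≤ S.mul y α m := h
    _ ≤ S.mul (S.mul (S.mul y γ y) θ w) α m := S.mono_left _ _ _ _ hy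
    _ = S.mul y γ (S.mul y θ (S.mul w α m)) := by rw [S.assoc, S.assoc]

/-- `M` is right regular and right duo iff for every `x`,
the filter generated by `x` is `{y | x ∈ (yΓM]}`. -/
theorem stmt_16 [Nonempty M] [Nonempty Γ] (S : OGS M Γ) :
    (S.rightRegular ∧ S.rightDuo) ↔
      ∀ x : M, S.isGenFilter x {y | x ∈ dcl (S.smul {y} Set.univ)} := by
  constructor
  · rintro ⟨hr, hd⟩ x
    -- `R b := (bΓM]` is a left ideal, by right duo
    have hLeft : ∀ b : M, ∀ s : M, ∀ γ : Γ, ∀ u ∈ dcl (S.smul {b} Set.univ),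
        S.mul s γ u ∈ dcl (S.smul {b} Set.univ) := by
      intro b s γ u hu
      exact (hd _ (S.R_rightIdeal b)).2.1 ⟨s, trivial, γ, u, hu, rfl⟩
    -- x belongs to the candidate filter
    have hxF : x ∈ {y | x ∈ dcl (S.smul {y} Set.univ)} := by
      obtain ⟨γ0⟩ := (inferInstance : Nonempty Γ)
      obtain ⟨θ, w, hxw⟩ := S.mem_R.mp (hr x γ0)
      exact S.mem_R.mpr ⟨γ0, S.mul x θ w, by
        calc x ≤ S.mul (S.mul x γ0 x) θ w := hxw
          _ = S.mul x γ0 (S.mul x θ w) := S.assoc _ _ _ _ _⟩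
    refine ⟨⟨⟨⟨x, hxF⟩, ?_⟩, ?_, ?_⟩, hxF, ?_⟩
    · -- subsemigroup
      intro a ha b hb γ
      obtain ⟨β, n, hbn⟩ := S.mem_R.mp hb
      obtain ⟨θ, w, hxw⟩ := S.mem_R.mp (hr x γ)
      -- x ≤ x γ u with u = b β (n θ w)
      have h1 : x ≤ S.mul x γ (S.mul b β (S.mul n θ w)) := by
        calc x ≤ S.mul (S.mul x γ x) θ w := hxw
          _ = S.mul x γ (S.mul x θ w) := S.assoc _ _ _ _ _
          _ ≤ S.mul x γ (S.mul (S.mul b β n) θ w) :=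
            S.mono_right _ _ _ _ (S.mono_left _ _ _ _ hbn)
          _ = S.mul x γ (S.mul b β (S.mul n θ w)) := by rw [S.assoc]
      obtain ⟨α, m, ham⟩ := S.mem_R.mp ha
      obtain ⟨s, hs⟩ := S.lemA hr ham γ
      set u := S.mul b β (S.mul n θ w) with hu
      have h2 : x ≤ S.mul a γ (S.mul s γ u) := by
        calc x ≤ S.mul x γ u := h1
          _ ≤ S.mul (S.mul a γ s) γ u := S.mono_left _ _ _ _ hs
          _ = S.mul a γ (S.mul s γ u) := S.assoc _ _ _ _ _
      have hu' : u ∈ dcl (S.smul {b} Set.univ) :=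
        S.mem_R.mpr ⟨β, S.mul n θ w, le_refl _⟩
      obtain ⟨ρ, k, hsk⟩ := S.mem_R.mp (hLeft b s γ u hu')
      refine S.mem_R.mpr ⟨ρ, k, ?_⟩
      calc x ≤ S.mul a γ (S.mul s γ u) := h2
        _ ≤ S.mul a γ (S.mul b ρ k) := S.mono_right _ _ _ _ hsk
        _ = S.mul (S.mul a γ b) ρ k := (S.assoc _ _ _ _ _).symm
    · -- filter property: a γ b ∈ F → a ∈ F ∧ b ∈ F
      intro a b γ hab
      obtain ⟨α, m, hm⟩ := S.mem_R.mp hab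
      have hx2 : x ≤ S.mul a γ (S.mul b α m) := by
        calc x ≤ S.mul (S.mul a γ b) α m := hm
          _ = S.mul a γ (S.mul b α m) := S.assoc _ _ _ _ _
      constructor
      · exact S.mem_R.mpr ⟨γ, S.mul b α m, hx2⟩
      · have hu' : S.mul b α m ∈ dcl (S.smul {b} Set.univ) :=
          S.mem_R.mpr ⟨α, m, le_refl _⟩
        obtain ⟨ρ, k, hk⟩ := S.mem_R.mp (hLeft b a γ _ hu')
        exact S.mem_R.mpr ⟨ρ, k, hx2.trans hk⟩
    · -- upward closed
      intro a ha b hab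
      obtain ⟨α, m, hm⟩ := S.mem_R.mp ha
      exact S.mem_R.mpr ⟨α, m, hm.trans (S.mono_left _ _ _ _ hab)⟩
    · -- least filter containing x
      rintro F ⟨_, hF2, hF3⟩ hxFil y hy
      obtain ⟨α, m, hm⟩ := S.mem_R.mp hy
      exact (hF2 y m α (hF3 x hxFil _ hm)).1
  · intro h
    constructor
    · -- right regular
      intro x γ
      obtain ⟨⟨⟨_, hclosed⟩, _, _⟩, hx, _⟩ := h x
      exact hclosed x hx x hx γ
    · -- right duo
      rintro A ⟨hne, hAM, hdown⟩
      refine ⟨hne, ?_, hdown⟩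
      rintro t ⟨m, -, γ, a, haA, rfl⟩
      obtain ⟨⟨_, hprop2, _⟩, hx, _⟩ := h (S.mul m γ a)
      obtain ⟨ρ, k, hk⟩ := S.mem_R.mp ((hprop2 m a γ hx).2)
      exact hdown _ (hAM ⟨a, haA, ρ, k, trivial, rfl⟩) _ hk
end

section
/- An ordered Γ-semigroup M is left regular if and only if every left ideal of M is semiprime. -/
variable {M Γ : Type*} [PartialOrder M]

/-- `M` is left regular iff every left ideal of `M` is semiprime. -/
theorem stmt_17 [Nonempty M] [Nonempty Γ] (S : OGS M Γ) :
    S.leftRegular ↔ ∀ A : Set M, S.isLeftIdeal A → S.semiprime A := by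

  constructor
  · intro hreg A ⟨hne, hMA, hdc⟩ x γ hx
    obtain ⟨h, ⟨m, -, γ', t, ht, rfl⟩, hle⟩ := hreg x γ
    rcases ht with rfl
    exact hdc _ (hMA ⟨m, trivial, γ', _, hx, rfl⟩) x hle
  · intro h x γ
    set a := S.mul x γ x with ha
    set L : Set M := dcl ({a} ∪ S.smul Set.univ {a}) with hL
    have hLideal : S.isLeftIdeal L := by
      refine ⟨⟨a, a, Or.inl rfl, le_rfl⟩, ?_, ?_⟩
      · rintro m ⟨p, -, γ', t, ⟨u, hu, hut⟩, rfl⟩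
        rcases hu with rfl | ⟨n, -, μ, b, hb, rfl⟩
        · exact ⟨S.mul p γ' a, Or.inr ⟨p, trivial, γ', a, rfl, rfl⟩,
            S.mono_right _ _ _ _ hut⟩
        · rcases hb with rfl
          refine ⟨S.mul (S.mul p γ' n) μ a, Or.inr ⟨_, trivial, μ, a, rfl, rfl⟩, ?_⟩
          calc S.mul p γ' t ≤ S.mul p γ' (S.mul n μ a) := S.mono_right _ _ _ _ hut
            _ = S.mul (S.mul p γ' n) μ a := (S.assoc _ _ _ _ _).symm
      · rintro u ⟨v, hv, huv⟩ b hb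
        exact ⟨v, hv, le_trans hb huv⟩
    have haL : a ∈ L := ⟨a, Or.inl rfl, le_rfl⟩
    have hxL : x ∈ L := h L hLideal x γ haL
    obtain ⟨v, hv, hxv⟩ := hxL
    rcases hv with rfl | ⟨n, -, μ, b, hb, rfl⟩
    · refine ⟨S.mul x γ a, ⟨x, trivial, γ, a, rfl, rfl⟩, ?_⟩
      calc x ≤ a := hxv
        _ = S.mul x γ x := rfl
        _ ≤ S.mul x γ a := S.mono_right _ _ _ _ hxv
    · rcases hb with rfl
      exact ⟨S.mul n μ a, ⟨n, trivial, μ, a, rfl, rfl⟩, hxv⟩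
end

section
/- An ordered Γ-semigroup M is right regular if and only if every right ideal of M is semiprime. -/
variable {M Γ : Type*} [PartialOrder M]

/-- `M` is right regular iff every right ideal of `M` is semiprime. -/
theorem stmt_18 [Nonempty M] [Nonempty Γ] (S : OGS M Γ) :
    S.rightRegular ↔ ∀ A : Set M, S.isRightIdeal A → S.semiprime A := by
  constructor
  · intro hrr A hA x γ hx
    obtain ⟨h, ⟨a, ha, δ, b, _, rfl⟩, hle⟩ := hrr x γ
    exact hA.2.2 _ (hA.2.1 ⟨a, ha ▸ hx, δ, b, trivial, rfl⟩) x hle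
  · intro h x γ
    set R : Set M := dcl ({S.mul x γ x} ∪ S.smul {S.mul x γ x} Set.univ) with hR
    have hRid : S.isRightIdeal R := by
      refine ⟨⟨S.mul x γ x, S.mul x γ x, Or.inl rfl, le_refl _⟩, ?_, ?_⟩
      · rintro m ⟨r, ⟨t, ht, hrt⟩, δ, b, -, rfl⟩
        refine ⟨S.mul t δ b, Or.inr ?_, S.mono_left _ _ _ _ hrt⟩
        rcases ht with rfl | ⟨a, rfl, μ, n, -, rfl⟩
        · exact ⟨_, rfl, δ, b, trivial, rfl⟩
        · exact ⟨_, rfl, μ, S.mul n δ b, trivial, (S.assoc _ _ _ _ _)⟩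
      · rintro a ⟨t, ht, hat⟩ b hba
        exact ⟨t, ht, le_trans hba hat⟩
    have hx : x ∈ R := h R hRid x γ ⟨S.mul x γ x, Or.inl rfl, le_refl _⟩
    obtain ⟨t, ht, hxt⟩ := hx
    rcases ht with rfl | ⟨a, rfl, μ, n, -, rfl⟩
    · refine ⟨S.mul (S.mul x γ x) γ x, ⟨_, rfl, γ, x, trivial, rfl⟩, ?_⟩
      calc x ≤ S.mul x γ x := hxt
        _ ≤ S.mul (S.mul x γ x) γ x := S.mono_left _ _ _ _ hxt
    · exact ⟨S.mul (S.mul x γ x) μ n, ⟨_, rfl, μ, n, trivial, rfl⟩, hxt⟩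
end
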